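/- There is no 2-edge-coloring c of a 3-uniform hairy odd cycle C whose color-blind partitions form a proper coloring on the cycle vertices. That is, if every cycle vertex of an odd cycle has exactly one pendant edge (degree 3), then for any 2-edge-coloring some two adjacent cycle vertices v, v' satisfy c*(v) = c*(v'). -/

import Mathlib

open Finset

/-- The color-blind partition of `v`: the multiset of (nonzero) counts of incident
edges of each color, i.e. the partition of `deg v` with trailing zeroes removed. -/
def cbp {V : Type*} [Fintype V] [DecidableEq V] (G : SimpleGraph V) [DecidableRel G.Adj]
    {k : ℕ} (c : Sym2 V → Fin k) (v : V) : Multiset ℕ :=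
  (((Finset.univ : Finset (Fin k)).val.map fun i =>
    ((G.neighborFinset v).filter fun w => c s(v, w) = i).card).filter fun m => m ≠ 0)

/-- `c` is a color-blind distinguishing edge-coloring of `G`. -/
def IsCBD {V : Type*} [Fintype V] [DecidableEq V] (G : SimpleGraph V) [DecidableRel G.Adj]
    {k : ℕ} (c : Sym2 V → Fin k) : Prop :=
  ∀ u v : V, G.Adj u v → cbp G c u ≠ cbp G c v

/-- Cycle and pendant edges of the 3-uniform hairy cycle: vertex `(j, false)` is the cycle
vertex `v_j` and `(j, true)` is its pendant neighbor `u_j`. -/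
def hairyRel (n : ℕ) (p q : Fin n × Bool) : Prop :=
  (p.2 = false ∧ q.2 = false ∧ (p.1.val + 1) % n = q.1.val) ∨
  (p.1 = q.1 ∧ p.2 = false ∧ q.2 = true)

instance (n : ℕ) : DecidableRel (hairyRel n) := fun p q => by unfold hairyRel; infer_instance

/-- The 3-uniform hairy cycle on `n` cycle vertices. -/
def hairyCycle (n : ℕ) : SimpleGraph (Fin n × Bool) where
  Adj p q := p ≠ q ∧ (hairyRel n p q ∨ hairyRel n q p)
  symm := ⟨fun p q h => ⟨h.1.symm, h.2.symm⟩⟩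
  loopless := ⟨fun p h => h.1 rfl⟩

instance (n : ℕ) : DecidableRel (hairyCycle n).Adj := fun p q =>
  inferInstanceAs (Decidable (p ≠ q ∧ (hairyRel n p q ∨ hairyRel n q p)))

/-!
Every cycle vertex has degree 3, so under a 2-edge-colouring its colour-blind partition is
`{3}` or `{1, 2}`. If adjacent cycle vertices always had different partitions, these two values
would properly 2-colour the odd cycle, whose chromatic number is 3.
-/

open SimpleGraph

section TwoColors

variable {V : Type*} [Fintype V] (G : SimpleGraph V) [DecidableRel G.Adj]
  (c : Sym2 V → Fin 2) (v : V)

lemma card_color_zero_add_card_color_one :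
    #{w ∈ G.neighborFinset v | c s(v, w) = 0} + #{w ∈ G.neighborFinset v | c s(v, w) = 1} =
      G.degree v := by
  have hone : ∀ i : Fin 2, i = 1 ↔ ¬ i = 0 := by decide
  simp only [hone, card_filter_add_card_filter_not, card_neighborFinset_eq_degree]

variable [DecidableEq V]

lemma cbp_fin_two :
    cbp G c v = Multiset.filter (· ≠ 0)
      {#{w ∈ G.neighborFinset v | c s(v, w) = 0}, #{w ∈ G.neighborFinset v | c s(v, w) = 1}} :=
  rfl

variable {G v} in
lemma cbp_eq_three_or_eq_one_two_of_degree_eq_three (hv : G.degree v = 3) :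
    cbp G c v = {3} ∨ cbp G c v = {1, 2} := by
  have hsum := card_color_zero_add_card_color_one G c v
  rw [cbp_fin_two]
  generalize #{w ∈ G.neighborFinset v | c s(v, w) = 0} = a at hsum ⊢
  generalize #{w ∈ G.neighborFinset v | c s(v, w) = 1} = b at hsum ⊢
  obtain ⟨rfl, rfl⟩ | ⟨rfl, rfl⟩ | ⟨rfl, rfl⟩ | ⟨rfl, rfl⟩ :
      a = 0 ∧ b = 3 ∨ a = 1 ∧ b = 2 ∨ a = 2 ∧ b = 1 ∨ a = 3 ∧ b = 0 := by omega
  all_goals decide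

end TwoColors

lemma SimpleGraph.colorable_two_of_forall_eq_or_eq {V α : Type*} {G : SimpleGraph V}
    (f : V → α) {a b : α} (hf : ∀ v, f v = a ∨ f v = b) (hadj : ∀ u v, G.Adj u v → f u ≠ f v) :
    G.Colorable 2 := by
  classical
  refine (Coloring.mk (fun v => decide (f v = a)) fun {u v} huv => ?_).colorable
  have := hadj u v huv
  grind

lemma Fin.val_add_one_mod_eq_iff {n : ℕ} [NeZero n] {a b : Fin n} :
    (a.val + 1) % n = b.val ↔ b = a + 1 := by
  rw [Fin.ext_iff, Fin.val_add, Fin.val_one', Nat.add_mod_mod, eq_comm]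

lemma hairyCycle_adj_cycle_vertex {n : ℕ} {j k : Fin (n + 2)} {b : Bool} :
    (hairyCycle (n + 2)).Adj (j, false) (k, b) ↔
      (b = false ∧ (cycleGraph (n + 2)).Adj j k) ∨ (b = true ∧ k = j) := by
  simp only [hairyCycle, hairyRel, cycleGraph_adj, Fin.val_add_one_mod_eq_iff]
  cases b
  · simp only [ne_eq, Prod.mk.injEq, and_true, true_and, Bool.false_eq_true, and_false, or_false,
      sub_eq_iff_eq_add', false_and]
    refine ⟨fun h => h.2.symm, fun h => ⟨?_, h.symm⟩⟩
    rintro rfl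
    simp at h
  · simp [eq_comm]

lemma hairyCycle_neighborFinset_cycle_vertex {n : ℕ} (j : Fin (n + 2)) :
    (hairyCycle (n + 2)).neighborFinset (j, false) =
      insert (j, true) ((cycleGraph (n + 2)).neighborFinset j ×ˢ {false}) := by
  ext ⟨k, b⟩
  cases b <;> simp [hairyCycle_adj_cycle_vertex, eq_comm]

lemma hairyCycle_degree_cycle_vertex {n : ℕ} (j : Fin (n + 3)) :
    (hairyCycle (n + 3)).degree (j, false) = 3 := by
  rw [← card_neighborFinset_eq_degree, hairyCycle_neighborFinset_cycle_vertex,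
    card_insert_of_notMem (by simp), card_product, card_neighborFinset_eq_degree,
    cycleGraph_degree_three_le, card_singleton]

theorem hairy_odd_cycle_no_two_coloring (n : ℕ) (hodd : Odd n) (h3 : 3 ≤ n)
    (c : Sym2 (Fin n × Bool) → Fin 2) :
    ∃ p q, (hairyCycle n).Adj p q ∧ p.2 = false ∧ q.2 = false ∧
      cbp (hairyCycle n) c p = cbp (hairyCycle n) c q := by
  obtain ⟨m, rfl⟩ : ∃ m, n = m + 3 := ⟨n - 3, by omega⟩
  by_contra! hne
  have hcolorable : (cycleGraph (m + 3)).Colorable 2 :=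
    colorable_two_of_forall_eq_or_eq (fun j => cbp (hairyCycle (m + 3)) c (j, false))
      (fun j => cbp_eq_three_or_eq_one_two_of_degree_eq_three c (hairyCycle_degree_cycle_vertex j))
      fun i j hij => hne _ _ (hairyCycle_adj_cycle_vertex.mpr (Or.inl ⟨rfl, hij⟩)) rfl rfl
  have hle := hcolorable.chromaticNumber_le
  rw [chromaticNumber_cycleGraph_of_odd _ (by omega) hodd] at hle
  exact absurd hle (by norm_num)
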